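/- Let α = (α_1,…,α_n) and β = (β_1,…,β_{n−1},1) be in (ℚ∖ℤ_{≤0})^n, let p be a prime number not dividing d_{α,β}, and suppose the couple (α,β) satisfies the P_{p,l} property. For a ∈ {1,…,l} and r′ ∈ S_{𝔇_p^{a−1}(α),𝔇_p^{a−1}(β),p}, define vectors α_{a,r′} and β_{a,r′} componentwise by: α_{a,r′,j} = 𝔇_p^a(α_j) if j ∈ C_{𝔇_p^{a−1}(α),r′} and α_{a,r′,j} = 𝔇_p^a(α_j)+1 if j ∈ P_{𝔇_p^{a−1}(α),r′}; β_{a,r′,j} = 𝔇_p^a(β_j) if j ∈ C_{𝔇_p^{a−1}(β),r′} and β_{a,r′,j} = 𝔇_p^a(β_j)+1 if j ∈ P_{𝔇_p^{a−1}(β),r′}. Then: (A) for every a ∈ {1,…,l} and every r′ ∈ S_{𝔇_p^{a−1}(α),𝔇_p^{a−1}(β),p}, the map σ : S_{α_{a,r′},β_{a,r′},p} → S_{𝔇_p^a(α),𝔇_p^a(β),p} given by σ(r) = r if r ≡ 1 − 𝔇_p^a(β_j) (mod pℤ_(p)) for some j ∈ C_{𝔇_p^{a−1}(β),r′}, and σ(r)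 = r+1 if r ≡ −𝔇_p^a(β_j) (mod pℤ_(p)) for some j ∈ P_{𝔇_p^{a−1}(β),r′}, is well-defined and bijective, with inverse τ : S_{𝔇_p^a(α),𝔇_p^a(β),p} → S_{α_{a,r′},β_{a,r′},p} given by τ(r) = r if r ≡ 1 − 𝔇_p^a(β_j) (mod pℤ_(p)) with j ∈ C_{𝔇_p^{a−1}(β),r′}, and τ(r) = r−1 if r ≡ 1 − 𝔇_p^a(β_j) (mod pℤ_(p)) with j ∈ P_{𝔇_p^{a−1}(β),r′}; and (B) for every r ∈ S_{α_{a,r′},β_{a,r′},p}, one has P_{α_{a,r′},r} = P_{𝔇_p^a(α),σ(r)}, C_{α_{a,r′},r} = C_{𝔇_p^a(α),σ(r)}, P_{β_{a,r′},r} = P_{𝔇_p^a(β),σ(r)}, and C_{β_{a,r′},r} = C_{𝔇_p^a(β),σ(r)}. -/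

import Mathlib

open Finset

noncomputable section

/-- The Pochhammer symbol `(x)_i = x (x+1) ⋯ (x+i-1)`. -/
def poch (x : ℚ) (i : ℕ) : ℚ := (ascPochhammer ℚ i).eval x

/-- `x` belongs to the local ring `ℤ_(p)` (written in lowest form, `p` does not
divide the denominator). -/
def inZp (p : ℕ) (x : ℚ) : Prop := ¬ (p ∣ x.den)

/-- `x` belongs to the maximal ideal `pℤ_(p)`. -/
def inPZp (p : ℕ) (x : ℚ) : Prop := ¬ (p ∣ x.den) ∧ (p : ℤ) ∣ x.num

/-- `x` is a unit of `ℤ_(p)`, i.e. `v_p(x) = 0`. -/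
def unitZp (p : ℕ) (x : ℚ) : Prop := ¬ (p ∣ x.den) ∧ ¬ ((p : ℤ) ∣ x.num)

/-- `x` is not a nonpositive integer. -/
def notNonposInt (x : ℚ) : Prop := ¬ ∃ m : ℤ, m ≤ 0 ∧ x = (m : ℚ)

/-- The hypergeometric coefficient `Q_{α,β}(i)`. -/
def Qcoef {n : ℕ} (α β : Fin n → ℚ) (i : ℕ) : ℚ :=
  (∏ s, poch (α s) i) / (∏ s, poch (β s) i)

/-- The generalized hypergeometric series `ₙF_{n-1}(α,β;z)`. -/
def hgF {n : ℕ} (α β : Fin n → ℚ) : PowerSeries ℚ :=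
  PowerSeries.mk fun i => Qcoef α β i

/-- `d_{α,β}`: the lcm of the denominators of the parameters. -/
def dab {n : ℕ} (α β : Fin n → ℚ) : ℕ :=
  Nat.lcm (Finset.univ.lcm fun i => (α i).den) (Finset.univ.lcm fun i => (β i).den)

/-- Dwork's map `𝔇_p`: the unique rational with `p · 𝔇_p x - x ∈ {0, …, p-1}`
(for `x ∈ ℤ_(p)` and `p` prime). -/
def Dp (p : ℕ) (x : ℚ) : ℚ :=
  (x + ((ZMod.val (-(x.num : ZMod p) * ((x.den : ℕ) : ZMod p)⁻¹) : ℕ) : ℚ)) / p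

/-- Componentwise iterate of Dwork's map. -/
def DIter (p a : ℕ) {n : ℕ} (γ : Fin n → ℚ) : Fin n → ℚ := fun i => (Dp p)^[a] (γ i)

open scoped Classical in
/-- The set `E_{γ,δ,p}` of residues of the exponents at zero (it only depends on `δ`,
whose last entry is `1`). -/
def Eset (p : ℕ) {n : ℕ} (δ : Fin n → ℚ) : Finset ℕ :=
  (Finset.range p).filter fun r => ∃ j, inPZp p ((r : ℚ) - (1 - δ j))

open scoped Classical in
/-- The set `S_{γ,δ,p}`. -/
def Sset (p : ℕ) {n : ℕ} (γ δ : Fin n → ℚ) : Finset ℕ :=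
  (Eset p δ).filter fun r => unitZp p (Qcoef γ δ r)

open scoped Classical in
/-- The set `P_{γ,r}`. -/
def Pset (p : ℕ) {n : ℕ} (γ : Fin n → ℚ) (r : ℕ) : Finset (Fin n) :=
  Finset.univ.filter fun s => inPZp p (poch (γ s) r)

open scoped Classical in
/-- The set `C_{γ,r}`. -/
def Cset (p : ℕ) {n : ℕ} (γ : Fin n → ℚ) (r : ℕ) : Finset (Fin n) :=
  Finset.univ.filter fun s => ¬ inPZp p (poch (γ s) r)

/-- The `P_{p,l}` property of the couple `(α,β)`. -/
def Pprop (p l : ℕ) {n : ℕ} (α β : Fin n → ℚ) : Prop :=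
  (∀ i, inZp p (α i)) ∧ (∀ i, inZp p (β i)) ∧
  ∀ k, 1 ≤ k → k ≤ l →
    ((∀ i, unitZp p ((Dp p)^[k] (α i))) ∧ (∀ i, unitZp p ((Dp p)^[k] (β i)))) ∧
    (∀ i j, unitZp p ((Dp p)^[k] (α i) - (Dp p)^[k] (β j))) ∧
    (∀ j s, unitZp p ((Dp p)^[k] (β j) - (Dp p)^[k] (β s)) ↔ β j ≠ β s) ∧
    (∀ j, β j ≠ 1 → (p : ℚ) * (Dp p)^[k] (β j) - (Dp p)^[k-1] (β j) ≠ (p : ℚ) - 1) ∧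
    (∀ i j, unitZp p (1 - (Dp p)^[k] (β j) + (Dp p)^[k] (α i)) ∧
            unitZp p (1 - (Dp p)^[k] (β j) + (Dp p)^[k] (β i)))

/-- The smallest element of `E_{·,δ,p} ∪ {p}` that is greater than `r`
(so if `r = e_{j-1}` in the increasing enumeration of `E`, this is `e_j`). -/
def nextE (p : ℕ) {n : ℕ} (δ : Fin n → ℚ) (r : ℕ) : ℕ :=
  sInf {e : ℕ | (e ∈ Eset p δ ∨ e = p) ∧ r < e}

/-- A power series over `ℚ`, viewed as a formal Laurent series. -/
def toLS (f : PowerSeries ℚ) : LaurentSeries ℚ := HahnSeries.ofPowerSeries ℤ ℚ f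

/-- A polynomial over `ℚ`, viewed as a formal Laurent series. -/
def polyToLS (q : Polynomial ℚ) : LaurentSeries ℚ := toLS (q : PowerSeries ℚ)

/-- `Q ∈ ℤ_(p)(z)`: the Laurent series `Q` is a ratio of polynomials with
coefficients in `ℤ_(p)`. -/
def ratOverZp (p : ℕ) (Q : LaurentSeries ℚ) : Prop :=
  ∃ A B : Polynomial ℚ, B ≠ 0 ∧ (∀ k, inZp p (A.coeff k)) ∧ (∀ k, inZp p (B.coeff k)) ∧
    Q * polyToLS B = polyToLS A

/-- `Q ∈ ℤ_(p)[[z]][z⁻¹]`: all coefficients of the Laurent series `Q` lie in `ℤ_(p)`. -/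
def laurentZp (p : ℕ) (Q : LaurentSeries ℚ) : Prop := ∀ k : ℤ, inZp p (Q.coeff k)

/-- The reduction of `Q` modulo `p` is a rational function over `𝔽_p` of height `< H`:
equivalently, `Q ≡ A/B mod p` with `B ≢ 0 mod p` and both degrees `< H`. -/
def heightModLt (p : ℕ) (Q : LaurentSeries ℚ) (H : ℕ) : Prop :=
  ∃ A B : Polynomial ℚ, (∀ k, inZp p (A.coeff k)) ∧ (∀ k, inZp p (B.coeff k)) ∧
    (∃ k, ¬ inPZp p (B.coeff k)) ∧ A.natDegree < H ∧ B.natDegree < H ∧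
    ∀ k : ℤ, inPZp p ((Q * polyToLS B - polyToLS A).coeff k)

section norms
variable {p : ℕ} (hp : p.Prime)

private lemma norm_char (hp : p.Prime) (x : ℚ) :
    (inZp p x ↔ padicNorm p x ≤ 1) ∧ (unitZp p x ↔ padicNorm p x = 1) ∧
    (inPZp p x ↔ padicNorm p x < 1) := by
  haveI : Fact p.Prime := ⟨hp⟩
  have hx : padicNorm p x = padicNorm p (x.num : ℚ) / padicNorm p (x.den : ℚ) := by
    conv_lhs => rw [← Rat.num_div_den x]
    rw [padicNorm.div]
  by_cases hden : p ∣ x.den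
  · have hnum : ¬ ((p : ℤ) ∣ x.num) := by
      intro hn
      have h1 : p ∣ x.num.natAbs := Int.natCast_dvd_natCast.mp (by
        rwa [Int.dvd_natAbs])
      have : p ∣ 1 := x.reduced ▸ Nat.dvd_gcd h1 hden
      exact hp.one_lt.ne' (Nat.eq_one_of_dvd_one this)
    have hN : padicNorm p (x.num : ℚ) = 1 := (padicNorm.int_eq_one_iff _).mpr hnum
    have hD : padicNorm p (x.den : ℚ) < 1 := (padicNorm.nat_lt_one_iff _).mpr hden
    have hD0 : (0:ℚ) < padicNorm p (x.den : ℚ) := by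
      have := padicNorm.nonzero (p := p) (q := ((x.den : ℚ))) (by
        exact_mod_cast x.den_ne_zero)
      exact lt_of_le_of_ne (padicNorm.nonneg _) (Ne.symm this)
    have hbig : 1 < padicNorm p x := by
      rw [hx, hN]
      rw [lt_div_iff₀ hD0, one_mul]
      exact hD
    refine ⟨?_, ?_, ?_⟩
    · simp [inZp, hden, not_le.mpr hbig]
    · simp [unitZp, hden, ne_of_gt hbig]
    · simp [inPZp, hden, not_lt.mpr (le_of_lt hbig)]
  · have hD : padicNorm p (x.den : ℚ) = 1 := (padicNorm.nat_eq_one_iff _).mpr hden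
    rw [hD, div_one] at hx
    refine ⟨?_, ?_, ?_⟩
    · simp only [inZp, hden, not_false_iff, true_iff, hx]
      exact padicNorm.of_int _
    · simp only [unitZp, hden, not_false_iff, true_and, hx]
      exact (padicNorm.int_eq_one_iff _).symm
    · simp only [inPZp, hden, not_false_iff, true_and, hx]
      exact (padicNorm.int_lt_one_iff _).symm

lemma inZp_iff (hp : p.Prime) (x : ℚ) : inZp p x ↔ padicNorm p x ≤ 1 := (norm_char hp x).1
lemma unitZp_iff (hp : p.Prime) (x : ℚ) : unitZp p x ↔ padicNorm p x = 1 := (norm_char hp x).2.1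
lemma inPZp_iff (hp : p.Prime) (x : ℚ) : inPZp p x ↔ padicNorm p x < 1 := (norm_char hp x).2.2
end norms

section utils
variable {p : ℕ}

lemma unit_add_small (hp : p.Prime) {u m : ℚ} (hu : padicNorm p u = 1) (hm : padicNorm p m < 1) :
    padicNorm p (u + m) = 1 := by
  haveI : Fact p.Prime := ⟨hp⟩
  have hlt : padicNorm p m < padicNorm p u := by rw [hu]; exact hm
  rw [padicNorm.add_eq_max_of_ne (ne_of_gt hlt), hu]
  exact max_eq_left (le_of_lt hm)

lemma padic_small_sub (hp : p.Prime) {a b : ℚ} (ha : padicNorm p a < 1) (hb : padicNorm p b < 1) :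
    padicNorm p (a - b) < 1 := by
  haveI : Fact p.Prime := ⟨hp⟩
  exact lt_of_le_of_lt padicNorm.sub (max_lt ha hb)

lemma poch_zero (x : ℚ) : poch x 0 = 1 := by simp [poch, ascPochhammer_zero]

lemma poch_succ (x : ℚ) (r : ℕ) : poch x (r + 1) = poch x r * (x + r) := by
  simp [poch, ascPochhammer_succ_right, Polynomial.eval_mul]

lemma poch_shift (x : ℚ) (r : ℕ) : x * poch (x + 1) r = poch x r * (x + r) := by
  induction r with
  | zero => simp [poch_zero]
  | succ r ih =>
    rw [poch_succ, poch_succ, ← mul_assoc, ih]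
    push_cast
    ring

lemma pochNorm_shift (hp : p.Prime) {x : ℚ} (hx : padicNorm p x = 1) (r : ℕ)
    (hxr : padicNorm p (x + r) = 1) :
    padicNorm p (poch (x + 1) r) = padicNorm p (poch x r) := by
  haveI : Fact p.Prime := ⟨hp⟩
  have := congrArg (padicNorm p) (poch_shift x r)
  rwa [padicNorm.mul, padicNorm.mul, hx, hxr, one_mul, mul_one] at this

lemma pochNorm_succ (hp : p.Prime) {x : ℚ} (r : ℕ) (hxr : padicNorm p (x + r) = 1) :
    padicNorm p (poch x (r + 1)) = padicNorm p (poch x r) := by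
  haveI : Fact p.Prime := ⟨hp⟩
  rw [poch_succ, padicNorm.mul, hxr, mul_one]

lemma pochNorm_shift' (hp : p.Prime) {x : ℚ} (hx : padicNorm p x = 1) (r : ℕ) :
    padicNorm p (poch (x + 1) r) = padicNorm p (poch x (r + 1)) := by
  haveI : Fact p.Prime := ⟨hp⟩
  have := congrArg (padicNorm p) (poch_shift x r)
  rw [padicNorm.mul, hx, one_mul] at this
  rw [this, poch_succ, padicNorm.mul]

lemma poch_one_eq (r : ℕ) : poch 1 r = (r.factorial : ℚ) := by
  induction r with
  | zero => simp [poch_zero]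
  | succ r ih => rw [poch_succ, ih, Nat.factorial_succ]; push_cast; ring

lemma poch_one_norm (hp : p.Prime) (r : ℕ) (hr : r < p) : padicNorm p (poch 1 r) = 1 := by
  haveI : Fact p.Prime := ⟨hp⟩
  rw [poch_one_eq]
  exact (padicNorm.nat_eq_one_iff _).mpr (fun h => absurd ((Nat.Prime.dvd_factorial hp).mp h)
    (not_le.mpr hr))

lemma Dp_one (hp : p.Prime) : Dp p 1 = 1 := by
  haveI : Fact p.Prime := ⟨hp⟩
  haveI : NeZero p := ⟨hp.ne_zero⟩
  have h1 : (1:ℚ).num = 1 := rfl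
  have h2 : (1:ℚ).den = 1 := rfl
  rw [Dp, h1, h2]
  have : (-(( (1:ℤ) : ZMod p)) * (((1:ℕ) : ZMod p))⁻¹) = (-1 : ZMod p) := by
    simp
  rw [this]
  obtain ⟨q, rfl⟩ := Nat.exists_eq_succ_of_ne_zero hp.ne_zero
  rw [ZMod.val_neg_one]
  have hq : ((q:ℚ) + 1) ≠ 0 := by positivity
  field_simp
  simp only [Nat.succ_eq_add_one, Nat.cast_add, Nat.cast_one]
  ring

lemma Dp_iterate_one (hp : p.Prime) (k : ℕ) : (Dp p)^[k] (1 : ℚ) = 1 := by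
  induction k with
  | zero => rfl
  | succ k ih => rw [Function.iterate_succ_apply', ih, Dp_one hp]
end utils

lemma padicNorm_prod {p : ℕ} (hp : p.Prime) {ι : Type*} (s : Finset ι) (f : ι → ℚ) :
    padicNorm p (∏ i ∈ s, f i) = ∏ i ∈ s, padicNorm p (f i) := by
  haveI : Fact p.Prime := ⟨hp⟩
  classical
  induction s using Finset.induction_on with
  | empty => simp
  | insert _ _ h ih => rw [Finset.prod_insert h, Finset.prod_insert h, padicNorm.mul, ih]

open scoped Classical in
/-- (Lemma `lemm_aux`.) The map `σ` is a well-defined bijection between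
`S_{α_{a,r'},β_{a,r'},p}` and `S_{𝔇_p^a(α),𝔇_p^a(β),p}` with inverse `τ`, and it is
compatible with the sets `P` and `C`. -/
theorem sigma_bijection {n : ℕ} (α β : Fin (n + 1) → ℚ)
    (hβlast : β (Fin.last n) = 1)
    (hα : ∀ i, notNonposInt (α i)) (hβn : ∀ i, notNonposInt (β i))
    (p : ℕ) (hp : Nat.Prime p) (hpd : ¬ p ∣ dab α β)
    (l : ℕ) (hP : Pprop p l α β)
    (a : ℕ) (ha1 : 1 ≤ a) (hal : a ≤ l)
    (r' : ℕ) (hr' : r' ∈ Sset p (DIter p (a - 1) α) (DIter p (a - 1) β))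
    (αa βa : Fin (n + 1) → ℚ)
    (hαa : αa = fun j => if inPZp p (poch ((Dp p)^[a - 1] (α j)) r')
      then (Dp p)^[a] (α j) + 1 else (Dp p)^[a] (α j))
    (hβa : βa = fun j => if inPZp p (poch ((Dp p)^[a - 1] (β j)) r')
      then (Dp p)^[a] (β j) + 1 else (Dp p)^[a] (β j))
    (σ τ : ℕ → ℕ)
    (hσ : σ = fun r : ℕ => if ∃ j ∈ Cset p (DIter p (a - 1) β) r',
      inPZp p ((r : ℚ) - (1 - (Dp p)^[a] (β j))) then r else r + 1)
    (hτ : τ = fun r : ℕ => if ∃ j ∈ Cset p (DIter p (a - 1) β) r',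
      inPZp p ((r : ℚ) - (1 - (Dp p)^[a] (β j))) then r else r - 1) :
    (∀ r ∈ Sset p αa βa,
      (∃ j ∈ Cset p (DIter p (a - 1) β) r',
        inPZp p ((r : ℚ) - (1 - (Dp p)^[a] (β j)))) ∨
      (∃ j ∈ Pset p (DIter p (a - 1) β) r',
        inPZp p ((r : ℚ) + (Dp p)^[a] (β j)))) ∧
    Set.BijOn σ (Sset p αa βa : Set ℕ) ((Sset p (DIter p a α) (DIter p a β) : Finset ℕ) : Set ℕ) ∧
    (∀ r ∈ Sset p (DIter p a α) (DIter p a β), τ r ∈ Sset p αa βa) ∧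
    (∀ r ∈ Sset p αa βa, τ (σ r) = r) ∧
    (∀ r ∈ Sset p (DIter p a α) (DIter p a β), σ (τ r) = r) ∧
    (∀ r ∈ Sset p αa βa,
      Pset p αa r = Pset p (DIter p a α) (σ r) ∧
      Cset p αa r = Cset p (DIter p a α) (σ r) ∧
      Pset p βa r = Pset p (DIter p a β) (σ r) ∧
      Cset p βa r = Cset p (DIter p a β) (σ r)) := by
  haveI : Fact p.Prime := ⟨hp⟩
  classical
  obtain ⟨hPa, hPb, hPk⟩ := hP
  obtain ⟨⟨hA1, hB1⟩, hH2, hH3, -, hH5⟩ := hPk a ha1 hal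
  have nA : ∀ i, padicNorm p ((Dp p)^[a] (α i)) = 1 := fun i => (unitZp_iff hp _).mp (hA1 i)
  have nB : ∀ i, padicNorm p ((Dp p)^[a] (β i)) = 1 := fun i => (unitZp_iff hp _).mp (hB1 i)
  have nAB : ∀ i j, padicNorm p ((Dp p)^[a] (α i) - (Dp p)^[a] (β j)) = 1 :=
    fun i j => (unitZp_iff hp _).mp (hH2 i j)
  have nBB : ∀ j s, β j ≠ β s → padicNorm p ((Dp p)^[a] (β j) - (Dp p)^[a] (β s)) = 1 :=
    fun j s h => (unitZp_iff hp _).mp ((hH3 j s).mpr h)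
  have n5a : ∀ i j, padicNorm p (1 - (Dp p)^[a] (β j) + (Dp p)^[a] (α i)) = 1 :=
    fun i j => (unitZp_iff hp _).mp (hH5 i j).1
  have n5b : ∀ i j, padicNorm p (1 - (Dp p)^[a] (β j) + (Dp p)^[a] (β i)) = 1 :=
    fun i j => (unitZp_iff hp _).mp (hH5 i j).2
  have memCs : ∀ j : Fin (n+1), j ∈ Cset p (DIter p (a-1) β) r' ↔
      ¬ inPZp p (poch ((Dp p)^[a-1] (β j)) r') := by
    intro j; simp only [Cset, Finset.mem_filter, Finset.mem_univ, true_and]; exact Iff.rfl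
  have memPs : ∀ j : Fin (n+1), j ∈ Pset p (DIter p (a-1) β) r' ↔
      inPZp p (poch ((Dp p)^[a-1] (β j)) r') := by
    intro j; simp only [Pset, Finset.mem_filter, Finset.mem_univ, true_and]; exact Iff.rfl
  have memS1 : ∀ r : ℕ, r ∈ Sset p αa βa ↔
      ((r < p ∧ ∃ j, inPZp p ((r:ℚ) - (1 - βa j))) ∧ unitZp p (Qcoef αa βa r)) := by
    intro r
    rw [Sset, Finset.mem_filter, Eset, Finset.mem_filter, Finset.mem_range]
  have memS2 : ∀ r : ℕ, r ∈ Sset p (DIter p a α) (DIter p a β) ↔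
      ((r < p ∧ ∃ j, inPZp p ((r:ℚ) - (1 - (Dp p)^[a] (β j)))) ∧
        unitZp p (Qcoef (DIter p a α) (DIter p a β) r)) := by
    intro r
    rw [Sset, Finset.mem_filter, Eset, Finset.mem_filter, Finset.mem_range]
    rfl
  have hr'p : r' < p := by
    have h := hr'
    rw [Sset, Finset.mem_filter, Eset, Finset.mem_filter, Finset.mem_range] at h
    exact h.1.1
  have hPne1 : ∀ j, inPZp p (poch ((Dp p)^[a-1] (β j)) r') → β j ≠ 1 := by
    intro j hj hj1
    rw [hj1, Dp_iterate_one hp, inPZp_iff hp, poch_one_norm hp r' hr'p] at hj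
    exact lt_irrefl _ hj
  have hPunit : ∀ j, inPZp p (poch ((Dp p)^[a-1] (β j)) r') →
      padicNorm p ((Dp p)^[a] (β j) - 1) = 1 := by
    intro j hj
    have h := nBB j (Fin.last n) (by rw [hβlast]; exact hPne1 j hj)
    rwa [hβlast, Dp_iterate_one hp] at h
  have CPexcl : ∀ r : ℕ, (∃ j ∈ Cset p (DIter p (a-1) β) r',
        inPZp p ((r:ℚ) - (1 - (Dp p)^[a] (β j)))) →
      (∃ j ∈ Pset p (DIter p (a-1) β) r',
        inPZp p ((r:ℚ) + (Dp p)^[a] (β j))) → False := by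
    rintro r ⟨j, -, hj⟩ ⟨i, -, hi⟩
    rw [inPZp_iff hp] at hj hi
    have h := padic_small_sub hp hi hj
    have heq : ((r:ℚ) + (Dp p)^[a] (β i)) - ((r:ℚ) - (1 - (Dp p)^[a] (β j)))
        = 1 - (Dp p)^[a] (β j) + (Dp p)^[a] (β i) := by ring
    rw [heq, n5b i j] at h
    exact lt_irrefl _ h
  have hσC : ∀ r : ℕ, (∃ j ∈ Cset p (DIter p (a-1) β) r',
      inPZp p ((r:ℚ) - (1 - (Dp p)^[a] (β j)))) → σ r = r := by
    intro r h; simp only [hσ]; rw [if_pos h]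
  have hσP : ∀ r : ℕ, ¬ (∃ j ∈ Cset p (DIter p (a-1) β) r',
      inPZp p ((r:ℚ) - (1 - (Dp p)^[a] (β j)))) → σ r = r + 1 := by
    intro r h; simp only [hσ]; rw [if_neg h]
  have hτC : ∀ r : ℕ, (∃ j ∈ Cset p (DIter p (a-1) β) r',
      inPZp p ((r:ℚ) - (1 - (Dp p)^[a] (β j)))) → τ r = r := by
    intro r h; simp only [hτ]; rw [if_pos h]
  have hτP : ∀ r : ℕ, ¬ (∃ j ∈ Cset p (DIter p (a-1) β) r',
      inPZp p ((r:ℚ) - (1 - (Dp p)^[a] (β j)))) → τ r = r - 1 := by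
    intro r h; simp only [hτ]; rw [if_neg h]
  have dich : ∀ r : ℕ, (∃ j, inPZp p ((r:ℚ) - (1 - βa j))) →
      (∃ j ∈ Cset p (DIter p (a-1) β) r', inPZp p ((r:ℚ) - (1 - (Dp p)^[a] (β j)))) ∨
      (∃ j ∈ Pset p (DIter p (a-1) β) r', inPZp p ((r:ℚ) + (Dp p)^[a] (β j))) := by
    rintro r ⟨j, hj⟩
    simp only [hβa] at hj
    by_cases hc : inPZp p (poch ((Dp p)^[a-1] (β j)) r')
    · right
      rw [if_pos hc] at hj
      refine ⟨j, (memPs j).mpr hc, ?_⟩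
      have heq : (r:ℚ) - (1 - ((Dp p)^[a] (β j) + 1)) = (r:ℚ) + (Dp p)^[a] (β j) := by ring
      rwa [heq] at hj
    · left
      rw [if_neg hc] at hj
      exact ⟨j, (memCs j).mpr hc, hj⟩
  have masterC : ∀ (r : ℕ) (j0 : Fin (n+1)), inPZp p ((r:ℚ) - (1 - (Dp p)^[a] (β j0))) →
      (∀ s, padicNorm p (poch (αa s) r) = padicNorm p (poch ((Dp p)^[a] (α s)) r)) ∧
      (∀ s, padicNorm p (poch (βa s) r) = padicNorm p (poch ((Dp p)^[a] (β s)) r)) := by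
    intro r j0 hj0
    rw [inPZp_iff hp] at hj0
    constructor
    · intro s
      simp only [hαa]
      by_cases hs : inPZp p (poch ((Dp p)^[a-1] (α s)) r')
      · rw [if_pos hs]
        refine pochNorm_shift hp (nA s) r ?_
        have heq : (Dp p)^[a] (α s) + (r:ℚ) =
            (1 - (Dp p)^[a] (β j0) + (Dp p)^[a] (α s)) + ((r:ℚ) - (1 - (Dp p)^[a] (β j0))) := by
          ring
        rw [heq]
        exact unit_add_small hp (n5a s j0) hj0
      · rw [if_neg hs]
    · intro s
      simp only [hβa]
      by_cases hs : inPZp p (poch ((Dp p)^[a-1] (β s)) r')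
      · rw [if_pos hs]
        refine pochNorm_shift hp (nB s) r ?_
        have heq : (Dp p)^[a] (β s) + (r:ℚ) =
            (1 - (Dp p)^[a] (β j0) + (Dp p)^[a] (β s)) + ((r:ℚ) - (1 - (Dp p)^[a] (β j0))) := by
          ring
        rw [heq]
        exact unit_add_small hp (n5b s j0) hj0
      · rw [if_neg hs]
  have masterP : ∀ (r : ℕ) (j0 : Fin (n+1)), inPZp p (poch ((Dp p)^[a-1] (β j0)) r') →
      inPZp p ((r:ℚ) + (Dp p)^[a] (β j0)) →
      (∀ s, padicNorm p (poch (αa s) r) = padicNorm p (poch ((Dp p)^[a] (α s)) (r+1))) ∧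
      (∀ s, padicNorm p (poch (βa s) r) = padicNorm p (poch ((Dp p)^[a] (β s)) (r+1))) := by
    intro r j0 hj0P hj0
    rw [inPZp_iff hp] at hj0
    constructor
    · intro s
      simp only [hαa]
      by_cases hs : inPZp p (poch ((Dp p)^[a-1] (α s)) r')
      · rw [if_pos hs]; exact pochNorm_shift' hp (nA s) r
      · rw [if_neg hs]
        refine (pochNorm_succ hp r ?_).symm
        have heq : (Dp p)^[a] (α s) + (r:ℚ) =
            ((Dp p)^[a] (α s) - (Dp p)^[a] (β j0)) + ((r:ℚ) + (Dp p)^[a] (β j0)) := by ring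
        rw [heq]
        exact unit_add_small hp (nAB s j0) hj0
    · intro s
      simp only [hβa]
      by_cases hs : inPZp p (poch ((Dp p)^[a-1] (β s)) r')
      · rw [if_pos hs]; exact pochNorm_shift' hp (nB s) r
      · rw [if_neg hs]
        refine (pochNorm_succ hp r ?_).symm
        have hne : β s ≠ β j0 := by
          intro hbb
          apply hs
          have hDD : (Dp p)^[a-1] (β s) = (Dp p)^[a-1] (β j0) := by rw [hbb]
          rw [hDD]; exact hj0P
        have heq : (Dp p)^[a] (β s) + (r:ℚ) =
            ((Dp p)^[a] (β s) - (Dp p)^[a] (β j0)) + ((r:ℚ) + (Dp p)^[a] (β j0)) := by ring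
        rw [heq]
        exact unit_add_small hp (nBB s j0 hne) hj0
  have Qtrans : ∀ (γ₁ δ₁ γ₂ δ₂ : Fin (n+1) → ℚ) (r₁ r₂ : ℕ),
      (∀ s, padicNorm p (poch (γ₁ s) r₁) = padicNorm p (poch (γ₂ s) r₂)) →
      (∀ s, padicNorm p (poch (δ₁ s) r₁) = padicNorm p (poch (δ₂ s) r₂)) →
      padicNorm p (Qcoef γ₁ δ₁ r₁) = padicNorm p (Qcoef γ₂ δ₂ r₂) := by
    intro γ₁ δ₁ γ₂ δ₂ r₁ r₂ h1 h2
    rw [Qcoef, Qcoef, padicNorm.div, padicNorm.div, padicNorm_prod hp, padicNorm_prod hp,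
      padicNorm_prod hp, padicNorm_prod hp,
      Finset.prod_congr rfl (fun s _ => h1 s), Finset.prod_congr rfl (fun s _ => h2 s)]
  have setEq : ∀ (γ₁ γ₂ : Fin (n+1) → ℚ) (r₁ r₂ : ℕ),
      (∀ s, padicNorm p (poch (γ₁ s) r₁) = padicNorm p (poch (γ₂ s) r₂)) →
      Pset p γ₁ r₁ = Pset p γ₂ r₂ ∧ Cset p γ₁ r₁ = Cset p γ₂ r₂ := by
    intro γ₁ γ₂ r₁ r₂ h
    constructor
    · ext s; simp [Pset, inPZp_iff hp, h s]
    · ext s; simp [Cset, inPZp_iff hp, h s]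
  have Plt : ∀ r : ℕ, r < p → (∃ j ∈ Pset p (DIter p (a-1) β) r',
      inPZp p ((r:ℚ) + (Dp p)^[a] (β j))) → r + 1 < p := by
    rintro r hrp ⟨j0, hj0mem, hj0⟩
    have hj0P := (memPs j0).mp hj0mem
    by_contra h
    have hre : r + 1 = p := by omega
    rw [inPZp_iff hp] at hj0
    have hn : padicNorm p ((r:ℚ) + (Dp p)^[a] (β j0)) = 1 := by
      have heq : (r:ℚ) + (Dp p)^[a] (β j0) = ((Dp p)^[a] (β j0) - 1) + (((r+1:ℕ)):ℚ) := by
        push_cast; ring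
      rw [heq, hre]
      exact unit_add_small hp (hPunit j0 hj0P) (padicNorm.padicNorm_p_lt_one hp.one_lt)
    rw [hn] at hj0
    exact lt_irrefl _ hj0
  have EtoPm : ∀ r : ℕ, ¬ (∃ j ∈ Cset p (DIter p (a-1) β) r',
        inPZp p ((r:ℚ) - (1 - (Dp p)^[a] (β j)))) →
      (∃ j, inPZp p ((r:ℚ) - (1 - (Dp p)^[a] (β j)))) →
      1 ≤ r ∧ ∃ j ∈ Pset p (DIter p (a-1) β) r',
        inPZp p (((r-1:ℕ):ℚ) + (Dp p)^[a] (β j)) := by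
    rintro r hnc ⟨j, hj⟩
    by_cases hc : inPZp p (poch ((Dp p)^[a-1] (β j)) r')
    · have hr1 : 1 ≤ r := by
        rcases Nat.eq_zero_or_pos r with h0 | h1
        · exfalso
          subst h0
          rw [inPZp_iff hp] at hj
          have heq : ((0:ℕ):ℚ) - (1 - (Dp p)^[a] (β j)) = (Dp p)^[a] (β j) - 1 := by
            push_cast; ring
          rw [heq, hPunit j hc] at hj
          exact lt_irrefl _ hj
        · exact h1
      refine ⟨hr1, j, (memPs j).mpr hc, ?_⟩
      have heq : ((r-1:ℕ):ℚ) + (Dp p)^[a] (β j) = (r:ℚ) - (1 - (Dp p)^[a] (β j)) := by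
        rw [Nat.cast_sub hr1]; push_cast; ring
      rwa [heq]
    · exact absurd ⟨j, (memCs j).mpr hc, hj⟩ hnc
  have PnotC : ∀ r : ℕ, (∃ j ∈ Pset p (DIter p (a-1) β) r',
        inPZp p ((r:ℚ) + (Dp p)^[a] (β j))) →
      ¬ (∃ j ∈ Cset p (DIter p (a-1) β) r',
        inPZp p (((r+1:ℕ):ℚ) - (1 - (Dp p)^[a] (β j)))) := by
    rintro r ⟨j0, hj0mem, hj0⟩ ⟨j, hjmem, hj⟩
    have hj0P := (memPs j0).mp hj0mem
    have hjC := (memCs j).mp hjmem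
    rw [inPZp_iff hp] at hj0 hj
    have hsmall := padic_small_sub hp hj hj0
    have heq : ((((r+1:ℕ)):ℚ) - (1 - (Dp p)^[a] (β j))) - ((r:ℚ) + (Dp p)^[a] (β j0))
        = (Dp p)^[a] (β j) - (Dp p)^[a] (β j0) := by push_cast; ring
    rw [heq] at hsmall
    by_cases hbb : β j = β j0
    · apply hjC
      have hDD : (Dp p)^[a-1] (β j) = (Dp p)^[a-1] (β j0) := by rw [hbb]
      rw [hDD]; exact hj0P
    · rw [nBB j j0 hbb] at hsmall
      exact lt_irrefl _ hsmall
  have fwd : ∀ r ∈ Sset p αa βa,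
      σ r ∈ Sset p (DIter p a α) (DIter p a β) ∧ τ (σ r) = r ∧
      (Pset p αa r = Pset p (DIter p a α) (σ r) ∧
       Cset p αa r = Cset p (DIter p a α) (σ r) ∧
       Pset p βa r = Pset p (DIter p a β) (σ r) ∧
       Cset p βa r = Cset p (DIter p a β) (σ r)) := by
    intro r hr
    obtain ⟨⟨hrp, hE⟩, hQ⟩ := (memS1 r).mp hr
    rcases dich r hE with hC | hPc
    · obtain ⟨j0, hj0mem, hj0⟩ := hC
      have hσr : σ r = r := hσC r ⟨j0, hj0mem, hj0⟩
      obtain ⟨mα, mβ⟩ := masterC r j0 hj0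
      rw [hσr]
      refine ⟨?_, hτC r ⟨j0, hj0mem, hj0⟩, ?_, ?_, ?_, ?_⟩
      · rw [memS2]
        refine ⟨⟨hrp, ⟨j0, hj0⟩⟩, ?_⟩
        rw [unitZp_iff hp] at hQ ⊢
        rw [← Qtrans αa βa (DIter p a α) (DIter p a β) r r mα mβ]
        exact hQ
      · exact (setEq αa (DIter p a α) r r mα).1
      · exact (setEq αa (DIter p a α) r r mα).2
      · exact (setEq βa (DIter p a β) r r mβ).1
      · exact (setEq βa (DIter p a β) r r mβ).2
    · have hnc : ¬ (∃ j ∈ Cset p (DIter p (a-1) β) r',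
          inPZp p ((r:ℚ) - (1 - (Dp p)^[a] (β j)))) := fun hc => CPexcl r hc hPc
      have hσr : σ r = r + 1 := hσP r hnc
      obtain ⟨j0, hj0mem, hj0⟩ := hPc
      obtain ⟨mα, mβ⟩ := masterP r j0 ((memPs j0).mp hj0mem) hj0
      rw [hσr]
      have hyE : inPZp p (((r+1:ℕ):ℚ) - (1 - (Dp p)^[a] (β j0))) := by
        have heq : (((r+1:ℕ)):ℚ) - (1 - (Dp p)^[a] (β j0)) = (r:ℚ) + (Dp p)^[a] (β j0) := by
          push_cast; ring
        rw [heq]; exact hj0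
      refine ⟨?_, ?_, ?_, ?_, ?_, ?_⟩
      · rw [memS2]
        refine ⟨⟨Plt r hrp ⟨j0, hj0mem, hj0⟩, ⟨j0, hyE⟩⟩, ?_⟩
        rw [unitZp_iff hp] at hQ ⊢
        rw [← Qtrans αa βa (DIter p a α) (DIter p a β) r (r+1) mα mβ]
        exact hQ
      · rw [hτP (r+1) (PnotC r ⟨j0, hj0mem, hj0⟩)]
        omega
      · exact (setEq αa (DIter p a α) r (r+1) mα).1
      · exact (setEq αa (DIter p a α) r (r+1) mα).2
      · exact (setEq βa (DIter p a β) r (r+1) mβ).1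
      · exact (setEq βa (DIter p a β) r (r+1) mβ).2
  have bwd : ∀ r ∈ Sset p (DIter p a α) (DIter p a β),
      τ r ∈ Sset p αa βa ∧ σ (τ r) = r := by
    intro r hr
    obtain ⟨⟨hrp, hE⟩, hQ⟩ := (memS2 r).mp hr
    by_cases hC : ∃ j ∈ Cset p (DIter p (a-1) β) r',
        inPZp p ((r:ℚ) - (1 - (Dp p)^[a] (β j)))
    · have hτr : τ r = r := hτC r hC
      obtain ⟨j0, hj0mem, hj0⟩ := hC
      obtain ⟨mα, mβ⟩ := masterC r j0 hj0
      rw [hτr]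
      constructor
      · rw [memS1]
        refine ⟨⟨hrp, ⟨j0, ?_⟩⟩, ?_⟩
        · simp only [hβa]
          rw [if_neg ((memCs j0).mp hj0mem)]
          exact hj0
        · rw [unitZp_iff hp] at hQ ⊢
          rw [Qtrans αa βa (DIter p a α) (DIter p a β) r r mα mβ]
          exact hQ
      · exact hσC r ⟨j0, hj0mem, hj0⟩
    · obtain ⟨hr1, j0, hj0mem, hj0⟩ := EtoPm r hC hE
      have hτr : τ r = r - 1 := hτP r hC
      have hPm : ∃ j ∈ Pset p (DIter p (a-1) β) r',
          inPZp p (((r-1:ℕ):ℚ) + (Dp p)^[a] (β j)) := ⟨j0, hj0mem, hj0⟩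
      have hnc1 : ¬ (∃ j ∈ Cset p (DIter p (a-1) β) r',
          inPZp p (((r-1:ℕ):ℚ) - (1 - (Dp p)^[a] (β j)))) := fun hc => CPexcl (r-1) hc hPm
      obtain ⟨mα, mβ⟩ := masterP (r-1) j0 ((memPs j0).mp hj0mem) hj0
      rw [hτr]
      constructor
      · rw [memS1]
        refine ⟨⟨by omega, ⟨j0, ?_⟩⟩, ?_⟩
        · simp only [hβa]
          rw [if_pos ((memPs j0).mp hj0mem)]
          have heq : ((r-1:ℕ):ℚ) - (1 - ((Dp p)^[a] (β j0) + 1)) =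
              ((r-1:ℕ):ℚ) + (Dp p)^[a] (β j0) := by ring
          rw [heq]; exact hj0
        · rw [unitZp_iff hp] at hQ ⊢
          rw [Qtrans αa βa (DIter p a α) (DIter p a β) (r-1) ((r-1)+1) mα mβ]
          have hre : r - 1 + 1 = r := by omega
          rw [hre]
          exact hQ
      · rw [hσP (r-1) hnc1]
        omega
  refine ⟨?_, ⟨?_, ?_, ?_⟩, ?_, ?_, ?_, ?_⟩
  · intro r hr
    exact dich r (((memS1 r).mp hr).1.2)
  · intro r hr
    exact Finset.mem_coe.mpr (fwd r (Finset.mem_coe.mp hr)).1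
  · intro r1 h1 r2 h2 heq
    rw [← (fwd r1 (Finset.mem_coe.mp h1)).2.1, ← (fwd r2 (Finset.mem_coe.mp h2)).2.1, heq]
  · intro y hy
    exact ⟨τ y, Finset.mem_coe.mpr (bwd y (Finset.mem_coe.mp hy)).1,
      (bwd y (Finset.mem_coe.mp hy)).2⟩
  · intro r hr
    exact (bwd r hr).1
  · intro r hr
    exact (fwd r hr).2.1
  · intro r hr
    exact (bwd r hr).2
  · intro r hr
    exact (fwd r hr).2.2
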